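/- arXiv:quant-ph/0302064 — 5 statements merged into one kernel-verified Lean document; each statement's English description precedes it below -/
import Mathlib

section
/- Let n ≥ 1 and let b_1, …, b_m be m orthonormal bases of ℂ^n (each b_i is a family of n vectors). Then the dimension of the ℂ-linear span of the mn rank-one projectors {P(v) : v a vector of some basis b_i} is at most mn − m + 1. -/
open Matrix

/-- The rank-one projector onto a vector `v ∈ ℂ^n`:
`(proj v) i j = v i * conj (v j)`. -/
noncomputable def proj {n : ℕ} (v : Fin n → ℂ) : Matrix (Fin n) (Fin n) ℂ :=
  fun i j => v i * (starRingEnd ℂ) (v j)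

/-- A family of `n` vectors in `ℂ^n` is an orthonormal basis iff it is
orthonormal with respect to the standard Hermitian inner product
(`n` orthonormal vectors in an `n`-dimensional space automatically span). -/
def IsONBasis {n : ℕ} (b : Fin n → (Fin n → ℂ)) : Prop :=
  ∀ k l, (∑ x, (starRingEnd ℂ) (b k x) * b l x) = if k = l then 1 else 0

lemma sum_proj {n : ℕ} (b : Fin n → Fin n → ℂ) (hb : IsONBasis b) :
    ∑ j, proj (b j) = 1 := by
  have h1 : (Matrix.of b) * (Matrix.of b)ᴴ = 1 := by
    ext k l
    simp only [Matrix.mul_apply, Matrix.conjTranspose_apply, Matrix.of_apply, Matrix.one_apply]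
    have : ∑ x, b k x * star (b l x)
        = star (∑ x, (starRingEnd ℂ) (b k x) * b l x) := by
      rw [star_sum]
      refine Finset.sum_congr rfl fun x _ => ?_
      simp [mul_comm]
    rw [this, hb k l]
    by_cases h : k = l <;> simp [h]
  have h2 : (Matrix.of b)ᴴ * (Matrix.of b) = 1 := mul_eq_one_comm.mp h1
  ext i i'
  have h3 := congrFun (congrFun h2 i') i
  simp only [Matrix.mul_apply, Matrix.conjTranspose_apply, Matrix.of_apply,
    Matrix.one_apply] at h3
  simp only [Matrix.sum_apply, proj, Matrix.one_apply]
  calc ∑ j, b j i * (starRingEnd ℂ) (b j i')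
      = ∑ j, (starRingEnd ℂ) (b j i') * b j i := by
        exact Finset.sum_congr rfl fun j _ => mul_comm _ _
    _ = if i' = i then 1 else 0 := h3
    _ = if i = i' then 1 else 0 := by by_cases h : i = i' <;> simp [h, eq_comm]

/-- The dimension of the ℂ-linear span of the `m*n` rank-one projectors coming
from `m` orthonormal bases of `ℂ^n` is at most `m*n - m + 1`. -/
theorem stmt2 {n m : ℕ} (hn : 1 ≤ n) (b : Fin m → Fin n → Fin n → ℂ)
    (hb : ∀ i, IsONBasis (b i)) :
    Module.finrank ℂ
        (Submodule.span ℂ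
          (Set.range fun q : Fin m × Fin n => proj (b q.1 q.2))) ≤
      m * n - m + 1 := by
  obtain ⟨k, rfl⟩ : ∃ k, n = k + 1 := ⟨n - 1, by omega⟩
  set g : Option (Fin m × Fin k) → Matrix (Fin (k + 1)) (Fin (k + 1)) ℂ :=
    fun o => o.elim 1 (fun q => proj (b q.1 q.2.succ)) with hg
  have hle : Submodule.span ℂ
        (Set.range fun q : Fin m × Fin (k + 1) => proj (b q.1 q.2)) ≤
      Submodule.span ℂ (Set.range g) := by
    rw [Submodule.span_le]
    rintro _ ⟨⟨i, j⟩, rfl⟩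
    rcases Fin.eq_zero_or_eq_succ j with hj | ⟨j', rfl⟩
    · subst hj
      have hsum := sum_proj (b i) (hb i)
      rw [Fin.sum_univ_succ] at hsum
      have hp : proj (b i 0) = (1 : Matrix (Fin (k + 1)) (Fin (k + 1)) ℂ)
          - ∑ j' : Fin k, proj (b i j'.succ) := by
        rw [← hsum]; abel
      show proj (b i 0) ∈ _
      rw [hp]
      refine Submodule.sub_mem _ (Submodule.subset_span ⟨none, rfl⟩)
        (Submodule.sum_mem _ fun j' _ => Submodule.subset_span ⟨some (i, j'), rfl⟩)
    · exact Submodule.subset_span ⟨some (i, j'), rfl⟩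
  have hcard : Module.finrank ℂ (Submodule.span ℂ (Set.range g))
      ≤ Fintype.card (Option (Fin m × Fin k)) := finrank_range_le_card g
  have hc : Fintype.card (Option (Fin m × Fin k)) = m * (k + 1) - m + 1 := by
    simp only [Fintype.card_option, Fintype.card_prod, Fintype.card_fin, Nat.mul_succ]
    omega
  exact ((Submodule.finrank_mono hle).trans hcard).trans_eq hc
end

section
/- Let n ≥ 1, ζ = exp(2πi/n), and let A and B be n×n unitary matrices satisfying A·B = ζ^j·B·A where gcd(j, n) = 1. Then there exists a complex number c with |c| = 1 such that the eigenvalues of B, counted with multiplicity (i.e., the multiset of roots of its characteristic polynomial), are exactly c, c·ζ, c·ζ², …, c·ζ^{n−1}, each occurring with multiplicity one. -/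
open Matrix

/-- The primitive `n`-th root of unity `ζ = exp(2πi/n)`. -/
noncomputable def zeta (n : ℕ) : ℂ := Complex.exp (2 * Real.pi * Complex.I / n)

/-!
Conjugation by `A` carries `B` to `ζ^j • B`, so the spectrum of `B` is stable under multiplication
by the primitive root `ζ^j`, hence also by `ζ`, a power of it. Starting from any eigenvalue `c`,
the `n` distinct points `c ζ^k` are roots of the characteristic polynomial, which has exactly `n`
roots; and `|c| = 1` since `B` is unitary.
-/

open Pointwise

theorem spectrum.smul_eq_self_of_mul_eq_smul_mul {𝕜 R : Type*} [Field 𝕜] [Ring R] [Algebra 𝕜 R]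
    {a b : R} {ω : 𝕜} (ha : IsUnit a) (hω : ω ≠ 0) (h : a * b = ω • (b * a)) :
    ω • spectrum 𝕜 b = spectrum 𝕜 b := by
  obtain ⟨u, rfl⟩ := ha
  have hconj : (u : R) * b * ↑u⁻¹ = (Units.mk0 ω hω) • b := by
    rw [h, smul_mul_assoc, mul_assoc, Units.mul_inv, mul_one]; rfl
  calc ω • spectrum 𝕜 b
      = spectrum 𝕜 (Units.mk0 ω hω • b) := by rw [spectrum.unit_smul_eq_smul]; rfl
    _ = spectrum 𝕜 b := by rw [← hconj, spectrum.units_conjugate]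

theorem Matrix.norm_eq_one_of_mem_roots_charpoly {ι : Type*} [Fintype ι] [DecidableEq ι]
    {B : Matrix ι ι ℂ} (hB : B * Bᴴ = 1) {c : ℂ} (hc : c ∈ B.charpoly.roots) : ‖c‖ = 1 := by
  open scoped Matrix.Norms.L2Operator in
  exact spectrum.norm_eq_one_of_unitary (mem_unitaryGroup_iff.mpr hB)
    (mem_spectrum_iff_isRoot_charpoly.mpr (Polynomial.isRoot_of_mem_roots hc))

theorem Matrix.mem_roots_charpoly_iff_mem_spectrum {K ι : Type*} [Field K] [Fintype ι]
    [DecidableEq ι] {B : Matrix ι ι K} {x : K} : x ∈ B.charpoly.roots ↔ x ∈ spectrum K B := by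
  rw [Polynomial.mem_roots B.charpoly_monic.ne_zero, mem_spectrum_iff_isRoot_charpoly]

theorem Multiset.eq_map_range_mul_pow {R : Type*} [CommRing R] [IsDomain R] {ζ : R} {n : ℕ}
    (hζ : IsPrimitiveRoot ζ n) {s : Multiset R} (hs : card s = n) {c : R} (hc : c ∈ s)
    (hc0 : c ≠ 0) (hmul : ∀ x ∈ s, ζ * x ∈ s) :
    s = (range n).map fun k => c * ζ ^ k := by
  have hmem : ∀ k, c * ζ ^ k ∈ s := by
    intro k
    induction k with
    | zero => simpa using hc
    | succ k ih => simpa [pow_succ', mul_left_comm] using hmul _ ih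
  have hnodup : ((range n).map fun k => c * ζ ^ k).Nodup :=
    (nodup_range n).map_on fun a ha b hb hab =>
      hζ.pow_inj (mem_range.mp ha) (mem_range.mp hb) (mul_left_cancel₀ hc0 hab)
  refine (eq_of_le_of_card_le ((le_iff_subset hnodup).mpr ?_) ?_).symm
  · intro x hx
    obtain ⟨k, -, rfl⟩ := mem_map.mp hx
    exact hmem k
  · simp [hs]

/-- If `A`, `B` are unitary with `A * B = ζ^j • (B * A)` and `gcd(j, n) = 1`,
then the eigenvalues of `B` (the multiset of roots of its characteristic
polynomial) are `c, c·ζ, …, c·ζ^(n-1)` for some `c` of modulus one. -/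
theorem stmt7 {n : ℕ} (hn : 1 ≤ n) (j : ℕ) (hj : Nat.gcd j n = 1)
    (A B : Matrix (Fin n) (Fin n) ℂ) (hA : A * Aᴴ = 1) (hB : B * Bᴴ = 1)
    (hcomm : A * B = zeta n ^ j • (B * A)) :
    ∃ c : ℂ, ‖c‖ = 1 ∧
      B.charpoly.roots = (Multiset.range n).map fun k => c * zeta n ^ k := by
  have : NeZero n := ⟨by omega⟩
  have hζ : IsPrimitiveRoot (zeta n) n := Complex.isPrimitiveRoot_exp n (by omega)
  have hω : IsPrimitiveRoot (zeta n ^ j) n := hζ.pow_of_coprime j hj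
  have hcard : B.charpoly.roots.card = n := by
    rw [IsAlgClosed.card_roots_eq_natDegree, charpoly_natDegree_eq_dim, Fintype.card_fin]
  obtain ⟨c, hc⟩ := Multiset.card_pos_iff_exists_mem.mp (hcard ▸ hn)
  have hc1 := norm_eq_one_of_mem_roots_charpoly hB hc
  have hc0 : c ≠ 0 := by rintro rfl; simp at hc1
  refine ⟨c, hc1, Multiset.eq_map_range_mul_pow hζ hcard hc hc0 ?_⟩
  have hstab : zeta n ^ j ∈ MulAction.stabilizerSubmonoid ℂ (spectrum ℂ B) :=
    spectrum.smul_eq_self_of_mul_eq_smul_mul (IsUnit.of_mul_eq_one Aᴴ hA)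
      (hω.ne_zero (by omega)) hcomm
  obtain ⟨i, -, hi⟩ := hω.eq_pow_of_pow_eq_one hζ.pow_eq_one
  have hζS : zeta n • spectrum ℂ B = spectrum ℂ B := hi ▸ pow_mem hstab i
  intro x hx
  rw [mem_roots_charpoly_iff_mem_spectrum] at hx ⊢
  exact hζS ▸ Set.smul_mem_smul_set hx
end

section
/- (Discrete version of the von Neumann uniqueness theorem.) Let n ≥ 1, ζ = exp(2πi/n), and let A and B be n×n unitary matrices satisfying A·B = ζ^j·B·A where gcd(j, n) = 1. Then there exist an n×n unitary matrix S and complex numbers c₁, c₂ with |c₁| = |c₂| = 1 such that S·A·S^{−1} = c₁·U^j and S·B·S^{−1} = c₂·V, where U, V is the Weyl pair in dimension n. -/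
/-!
Since `ζ ^ j` is again a primitive `n`-th root of unity, `A ^ n` commutes with `B`, so they have a
common unit eigenvector `v`: `A ^ n v = μ v`, `B v = β v`. Fix `c` with `c ^ n = μ`. The vectors
`c⁻¹ ^ m • A ^ m v` are unit eigenvectors of `B` with eigenvalues `β ζ^(-j m)`, and `A` maps each to
`c` times the next one, with period `n`. As `j` is invertible mod `n`, every eigenvalue `β ζ^i`
occurs exactly once, and eigenvectors of a unitary matrix for distinct eigenvalues are orthogonal;
in this orthonormal basis `B` acts as `β V` and `A` as `c U^j`.
-/

open Matrix

/-- The cyclic shift matrix `U` of the Weyl pair: `U i j = 1` iff `j ≡ i + 1 (mod n)`. -/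
def weylU (n : ℕ) : Matrix (Fin n) (Fin n) ℂ :=
  Matrix.of fun i j => if ((i : ℕ) + 1) % n = (j : ℕ) then 1 else 0

/-- The diagonal matrix `V` of the Weyl pair: `V k k = ζ^k`. -/
noncomputable def weylV (n : ℕ) : Matrix (Fin n) (Fin n) ℂ :=
  Matrix.diagonal fun k => zeta n ^ (k : ℕ)

namespace Module.End

theorem exists_common_eigenvector {K V : Type*} [Field K] [IsAlgClosed K] [AddCommGroup V]
    [Module K V] [FiniteDimensional K V] [Nontrivial V] {f g : End K V} (h : Commute f g) :
    ∃ (α β : K) (v : V), v ≠ 0 ∧ f v = α • v ∧ g v = β • v := by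
  obtain ⟨α, hα⟩ := exists_eigenvalue f
  have hmaps : ∀ x ∈ f.eigenspace α, g x ∈ f.eigenspace α := fun x hx => by
    rw [mem_eigenspace_iff] at hx ⊢
    rw [← Module.End.mul_apply, h.eq, Module.End.mul_apply, hx, map_smul]
  have : Nontrivial (f.eigenspace α) := Submodule.nontrivial_iff_ne_bot.mpr hα
  obtain ⟨β, hβ⟩ := exists_eigenvalue (g.restrict hmaps)
  obtain ⟨⟨v, hv⟩, hgv⟩ := hβ.exists_hasEigenvector
  refine ⟨α, β, v, ?_, mem_eigenspace_iff.mp hv, ?_⟩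
  · simpa using hgv.2
  · simpa [Subtype.ext_iff] using hgv.apply_eq_smul

end Module.End

open ComplexOrder in
theorem exists_smul_star_dotProduct_self_eq_one {ι : Type*} [Fintype ι] {v : ι → ℂ}
    (hv : v ≠ 0) : ∃ s : ℂ, star (s • v) ⬝ᵥ (s • v) = 1 := by
  obtain ⟨r, hr, hrv⟩ := RCLike.pos_iff_exists_ofReal.mp (dotProduct_star_self_pos_iff.mpr hv)
  refine ⟨(Real.sqrt r : ℂ)⁻¹, ?_⟩
  rw [star_smul, smul_dotProduct, dotProduct_smul, ← hrv]
  simp only [smul_eq_mul, star_inv₀, Complex.star_def, Complex.conj_ofReal, ← mul_assoc,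
    ← mul_inv, ← Complex.ofReal_mul, Real.mul_self_sqrt hr.le]
  exact inv_mul_cancel₀ (by exact_mod_cast hr.ne')

theorem Matrix.exists_common_unit_eigenvector {ι : Type*} [Fintype ι] [DecidableEq ι]
    [Nonempty ι] {A B : Matrix ι ι ℂ} (h : Commute A B) :
    ∃ (α β : ℂ) (v : ι → ℂ), A *ᵥ v = α • v ∧ B *ᵥ v = β • v ∧ star v ⬝ᵥ v = 1 := by
  have hlin := h.map toLinAlgEquiv'
  obtain ⟨α, β, v, hv, hAv, hBv⟩ := Module.End.exists_common_eigenvector hlin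
  obtain ⟨s, hs⟩ := exists_smul_star_dotProduct_self_eq_one hv
  refine ⟨α, β, s • v, ?_, ?_, hs⟩
  · rw [mulVec_smul, ← toLinAlgEquiv'_apply, hAv, smul_comm]
  · rw [mulVec_smul, ← toLinAlgEquiv'_apply, hBv, smul_comm]

section Unitary

variable {ι : Type*} [Fintype ι] [DecidableEq ι] {M : Matrix ι ι ℂ}

theorem star_mulVec_dotProduct_mulVec (hM : M ∈ unitaryGroup ι ℂ) (x y : ι → ℂ) :
    star (M *ᵥ x) ⬝ᵥ (M *ᵥ y) = star x ⬝ᵥ y := by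
  rw [star_mulVec, dotProduct_mulVec, vecMul_vecMul, ← star_eq_conjTranspose,
    Unitary.star_mul_self_of_mem hM, vecMul_one]

theorem norm_eq_one_of_mulVec_eq_smul (hM : M ∈ unitaryGroup ι ℂ) {x : ι → ℂ} {α : ℂ}
    (hx : M *ᵥ x = α • x) (hxx : star x ⬝ᵥ x = 1) : ‖α‖ = 1 := by
  have h := star_mulVec_dotProduct_mulVec hM x x
  rw [hx, star_smul, smul_dotProduct, dotProduct_smul, hxx, smul_eq_mul, smul_eq_mul, mul_one,
    Complex.star_def, Complex.conj_mul'] at h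
  exact (pow_eq_one_iff_of_nonneg (norm_nonneg α) two_ne_zero).mp (by exact_mod_cast h)

theorem dotProduct_eq_zero_of_mulVec_eq_smul (hM : M ∈ unitaryGroup ι ℂ) {x y : ι → ℂ}
    {α β : ℂ} (hx : M *ᵥ x = α • x) (hy : M *ᵥ y = β • y) (hα : ‖α‖ = 1) (hne : α ≠ β) :
    star x ⬝ᵥ y = 0 := by
  have hαα : star α * α = 1 := by simp [Complex.conj_mul', hα]
  have h := star_mulVec_dotProduct_mulVec hM x y
  rw [hx, hy, star_smul, smul_dotProduct, dotProduct_smul, smul_eq_mul, smul_eq_mul] at h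
  have : (β - α) * (star x ⬝ᵥ y) = 0 := by linear_combination α * h - β * (star x ⬝ᵥ y) * hαα
  exact (mul_eq_zero.mp this).resolve_left (sub_ne_zero.mpr hne.symm)

theorem transpose_of_eigenvectors_mem_unitaryGroup (hM : M ∈ unitaryGroup ι ℂ) {t : ι → ι → ℂ}
    {α : ι → ℂ} (hα : Function.Injective α) (ht : ∀ i, M *ᵥ t i = α i • t i)
    (hunit : ∀ i, star (t i) ⬝ᵥ t i = 1) : (of t)ᵀ ∈ unitaryGroup ι ℂ := by
  rw [mem_unitaryGroup_iff']
  ext i i'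
  suffices star (t i) ⬝ᵥ t i' = if i = i' then 1 else 0 by
    simpa [mul_apply, one_apply, dotProduct] using this
  split_ifs with h
  · rw [h, hunit]
  · exact dotProduct_eq_zero_of_mulVec_eq_smul hM (ht i) (ht i')
      (norm_eq_one_of_mulVec_eq_smul hM (ht i) (hunit i)) (hα.ne h)

theorem star_mul_mul_eq_of_mul_eq_mul {T A N : Matrix ι ι ℂ} (hT : T ∈ unitaryGroup ι ℂ)
    (h : A * T = T * N) : star T * A * T = N := by
  rw [Matrix.mul_assoc, h, ← Matrix.mul_assoc, Unitary.star_mul_self_of_mem hT, Matrix.one_mul]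

end Unitary

theorem mul_pow_eq_smul_pow_mul {R M : Type*} [CommSemiring R] [Semiring M] [Algebra R M]
    {a b : M} {r : R} (h : b * a = r • (a * b)) (m : ℕ) : b * a ^ m = r ^ m • (a ^ m * b) := by
  induction m with
  | zero => simp
  | succ m ih =>
    rw [pow_succ, ← mul_assoc, ih, smul_mul_assoc, mul_assoc, h, mul_smul_comm, smul_smul,
      pow_succ, ← mul_assoc, ← pow_succ]

section ScaledOrbit

variable {ι : Type*} [Fintype ι] [DecidableEq ι] {A B : Matrix ι ι ℂ} {c : ℂ} {v : ι → ℂ}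

noncomputable def scaledOrbit (A : Matrix ι ι ℂ) (c : ℂ) (v : ι → ℂ) (m : ℕ) : ι → ℂ :=
  c⁻¹ ^ m • (A ^ m *ᵥ v)

theorem mulVec_scaledOrbit (hc : c ≠ 0) (m : ℕ) :
    A *ᵥ scaledOrbit A c v m = c • scaledOrbit A c v (m + 1) := by
  rw [scaledOrbit, scaledOrbit, mulVec_smul, mulVec_mulVec, ← pow_succ', smul_smul,
    pow_succ c⁻¹, mul_left_comm, mul_inv_cancel₀ hc, mul_one]

theorem scaledOrbit_eq_of_modEq {n a b : ℕ} (hc : c ≠ 0) (hv : A ^ n *ᵥ v = c ^ n • v)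
    (h : a ≡ b [MOD n]) : scaledOrbit A c v a = scaledOrbit A c v b := by
  have hper : Function.Periodic (scaledOrbit A c v) n := fun m => by
    rw [scaledOrbit, scaledOrbit, pow_add, pow_add, ← mulVec_mulVec, hv, mulVec_smul, smul_smul,
      mul_assoc, inv_pow c n, inv_mul_cancel₀ (pow_ne_zero n hc), mul_one]
  rw [← hper.map_mod_nat a, ← hper.map_mod_nat b, h]

theorem mulVec_scaledOrbit_of_mul_eq_smul {r β : ℂ} (h : B * A = r • (A * B))
    (hv : B *ᵥ v = β • v) (m : ℕ) :
    B *ᵥ scaledOrbit A c v m = (β * r ^ m) • scaledOrbit A c v m := by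
  rw [scaledOrbit, mulVec_smul, mulVec_mulVec, mul_pow_eq_smul_pow_mul h, smul_mulVec,
    ← mulVec_mulVec, hv, mulVec_smul, smul_smul, smul_smul, smul_smul]
  ring_nf

theorem star_scaledOrbit_dotProduct_self (hA : A ∈ unitaryGroup ι ℂ) (hc : ‖c‖ = 1)
    (hv : star v ⬝ᵥ v = 1) (m : ℕ) :
    star (scaledOrbit A c v m) ⬝ᵥ scaledOrbit A c v m = 1 := by
  rw [scaledOrbit, star_smul, smul_dotProduct, dotProduct_smul,
    star_mulVec_dotProduct_mulVec (pow_mem hA m), hv, smul_eq_mul, smul_eq_mul, mul_one,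
    Complex.star_def, Complex.conj_mul', norm_pow, norm_inv, hc]
  simp

end ScaledOrbit

section Weyl

open Fin.NatCast

theorem isPrimitiveRoot_zeta (n : ℕ) [NeZero n] : IsPrimitiveRoot (zeta n) n :=
  Complex.isPrimitiveRoot_exp n (NeZero.ne n)

theorem weylU_pow (n : ℕ) [NeZero n] (m : ℕ) :
    weylU n ^ m = (Equiv.addRight (m : Fin n)).toPEquiv.toMatrix := by
  induction m with
  | zero => simp
  | succ m ih =>
    have hU : weylU n = (Equiv.addRight (1 : Fin n)).toPEquiv.toMatrix := by
      ext i l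
      simp [weylU, PEquiv.toMatrix_apply, Fin.ext_iff, Fin.val_add]
    rw [pow_succ, ih, hU, ← PEquiv.toMatrix_trans, ← Equiv.toPEquiv_trans]
    congr 2
    ext i
    simp [add_assoc]

theorem mul_transpose_eq_mul_smul_weylU_pow {n : ℕ} [NeZero n] {A : Matrix (Fin n) (Fin n) ℂ}
    {t : Fin n → Fin n → ℂ} {c : ℂ} {m : ℕ} (h : ∀ i, A *ᵥ t i = c • t (i - m)) :
    A * (of t)ᵀ = (of t)ᵀ * (c • weylU n ^ m) := by
  ext a i
  rw [mul_smul_comm, weylU_pow, PEquiv.mul_toMatrix_toPEquiv]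
  simpa [sub_eq_add_neg, mulVec, dotProduct, mul_apply] using congr_fun (h i) a

theorem mul_transpose_eq_mul_smul_weylV {n : ℕ} {B : Matrix (Fin n) (Fin n) ℂ}
    {t : Fin n → Fin n → ℂ} {β : ℂ} (h : ∀ i : Fin n, B *ᵥ t i = (β * zeta n ^ (i : ℕ)) • t i) :
    B * (of t)ᵀ = (of t)ᵀ * (β • weylV n) := by
  ext a i
  rw [weylV, ← diagonal_smul, mul_diagonal]
  simpa [mulVec, dotProduct, mul_apply, mul_comm] using congr_fun (h i) a

theorem IsPrimitiveRoot.exists_pow_index {K : Type*} [Field K] {ζ : K} {n j : ℕ} [NeZero n]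
    (hζ : IsPrimitiveRoot ζ n) (hj : j.Coprime n) :
    ∃ k : Fin n → ℕ, ∀ i : Fin n,
      (ζ ^ j) ^ k i = (ζ ^ (i : ℕ))⁻¹ ∧ k i + 1 ≡ k (i - j) [MOD n] := by
  have hξ : IsPrimitiveRoot (ζ ^ j) n := hζ.pow_of_coprime j hj
  have hζmod : ∀ x, ζ ^ (x % n) = ζ ^ x := fun x => by
    conv_rhs => rw [← Nat.mod_add_div x n, pow_add, pow_mul, hζ.pow_eq_one, one_pow, mul_one]
  choose k hk using fun i : Fin n => hξ.eq_pow_of_pow_eq_one (ξ := (ζ ^ (i : ℕ))⁻¹)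
    (by rw [inv_pow, ← pow_mul, mul_comm, pow_mul, hζ.pow_eq_one, one_pow, inv_one])
  refine ⟨k, fun i => ⟨(hk i).2, ?_⟩⟩
  have hζi : ζ ^ (i : ℕ) = ζ ^ ((i - j : Fin n) : ℕ) * ζ ^ j := by
    conv_lhs => rw [← sub_add_cancel i (j : Fin n)]
    rw [Fin.val_add, hζmod, pow_add, Fin.val_natCast, hζmod]
  have h : (ζ ^ j) ^ (k i + 1) = (ζ ^ j) ^ k (i - j) := by
    rw [pow_succ, (hk i).2, (hk _).2, hζi, mul_inv,
      inv_mul_cancel_right₀ (hξ.ne_zero (NeZero.ne n))]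
  have := (hξ.isOfFinOrder (NeZero.ne n)).pow_eq_pow_iff_modEq.mp h
  rwa [← hξ.eq_orderOf] at this

theorem exists_unitary_mul_eq_mul_weyl {n : ℕ} [NeZero n] {j : ℕ} (hj : j.Coprime n)
    {A B : Matrix (Fin n) (Fin n) ℂ} (hA : A ∈ unitaryGroup (Fin n) ℂ)
    (hB : B ∈ unitaryGroup (Fin n) ℂ) (hAB : A * B = zeta n ^ j • (B * A)) :
    ∃ (T : Matrix (Fin n) (Fin n) ℂ) (c₁ c₂ : ℂ), T ∈ unitaryGroup (Fin n) ℂ ∧ ‖c₁‖ = 1 ∧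
      ‖c₂‖ = 1 ∧ A * T = T * (c₁ • weylU n ^ j) ∧ B * T = T * (c₂ • weylV n) := by
  set ζ := zeta n
  have hζ : IsPrimitiveRoot ζ n := isPrimitiveRoot_zeta n
  have hξ : IsPrimitiveRoot (ζ ^ j) n := hζ.pow_of_coprime j hj
  have hBA : B * A = (ζ ^ j)⁻¹ • (A * B) := by
    rw [hAB, smul_smul, inv_mul_cancel₀ (hξ.ne_zero (NeZero.ne n)), one_smul]
  have hcomm : Commute (A ^ n) B := by
    rw [Commute, SemiconjBy, mul_pow_eq_smul_pow_mul hBA, inv_pow, hξ.pow_eq_one, inv_one,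
      one_smul]
  obtain ⟨μ, β, v, hAv, hBv, hvv⟩ := exists_common_unit_eigenvector hcomm
  have hμ : ‖μ‖ = 1 := norm_eq_one_of_mulVec_eq_smul (pow_mem hA n) hAv hvv
  have hβ : ‖β‖ = 1 := norm_eq_one_of_mulVec_eq_smul hB hBv hvv
  obtain ⟨c, hcμ⟩ := IsAlgClosed.exists_pow_nat_eq μ (Nat.pos_of_neZero n)
  have hc : ‖c‖ = 1 := (pow_eq_one_iff_of_nonneg (norm_nonneg c) (NeZero.ne n)).mp
    (by rw [← norm_pow, hcμ, hμ])
  have hc0 : c ≠ 0 := norm_ne_zero_iff.mp (by rw [hc]; exact one_ne_zero)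
  set w := scaledOrbit A c v
  -- `w (k i)` is the orbit vector with `B`-eigenvalue `β * ζ ^ i`: column `i` of the result
  obtain ⟨k, hk⟩ := hζ.exists_pow_index hj
  have hBw : ∀ i : Fin n, B *ᵥ w (k i) = (β * ζ ^ (i : ℕ)) • w (k i) := fun i => by
    rw [mulVec_scaledOrbit_of_mul_eq_smul hBA hBv, inv_pow, (hk i).1, inv_inv]
  have hAw : ∀ i : Fin n, A *ᵥ w (k i) = c • w (k (i - j)) := fun i => by
    rw [mulVec_scaledOrbit hc0, scaledOrbit_eq_of_modEq hc0 (by rw [hAv, hcμ]) (hk i).2]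
  have hβ0 : β ≠ 0 := norm_ne_zero_iff.mp (by rw [hβ]; exact one_ne_zero)
  refine ⟨(of fun i => w (k i))ᵀ, c, β, ?_, hc, hβ, mul_transpose_eq_mul_smul_weylU_pow hAw,
    mul_transpose_eq_mul_smul_weylV hBw⟩
  refine transpose_of_eigenvectors_mem_unitaryGroup hB (fun a b h => ?_) hBw
    fun i => star_scaledOrbit_dotProduct_self hA hc hvv (k i)
  exact Fin.ext (hζ.pow_inj a.isLt b.isLt (mul_left_cancel₀ hβ0 h))

end Weyl

/-- Discrete version of the von Neumann uniqueness theorem: if `A`, `B` are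
unitary with `A * B = ζ^j • (B * A)` and `gcd(j, n) = 1`, then there is a
unitary `S` conjugating `A` to `c₁ • U^j` and `B` to `c₂ • V`, with `|c₁| = |c₂| = 1`. -/
theorem stmt8 {n : ℕ} (hn : 1 ≤ n) (j : ℕ) (hj : Nat.gcd j n = 1)
    (A B : Matrix (Fin n) (Fin n) ℂ) (hA : A * Aᴴ = 1) (hB : B * Bᴴ = 1)
    (hcomm : A * B = zeta n ^ j • (B * A)) :
    ∃ (S : Matrix (Fin n) (Fin n) ℂ) (c₁ c₂ : ℂ),
      S * Sᴴ = 1 ∧ ‖c₁‖ = 1 ∧ ‖c₂‖ = 1 ∧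
      S * A * Sᴴ = c₁ • weylU n ^ j ∧ S * B * Sᴴ = c₂ • weylV n := by
  have : NeZero n := NeZero.of_pos hn
  obtain ⟨T, c₁, c₂, hT, hc₁, hc₂, hAT, hBT⟩ := exists_unitary_mul_eq_mul_weyl hj
    (mem_unitaryGroup_iff.mpr hA) (mem_unitaryGroup_iff.mpr hB) hcomm
  refine ⟨star T, c₁, c₂, ?_, hc₁, hc₂, ?_, ?_⟩ <;> rw [← star_eq_conjTranspose, star_star]
  exacts [mem_unitaryGroup_iff'.mp hT, star_mul_mul_eq_of_mul_eq_mul hT hAT,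
    star_mul_mul_eq_of_mul_eq_mul hT hBT]
end

section
/- Let n ≥ 1 and let U, V be the Weyl pair in dimension n. Then the n² matrices {U^k · V^l : k, l = 0, …, n−1} form a basis of the ℂ-vector space of all n×n complex matrices; in particular they are linearly independent over ℂ and their ℂ-linear span is the whole matrix space. -/
open Matrix

lemma weylU_pow_apply {n : ℕ} (hn : 1 ≤ n) (k : ℕ) (i j : Fin n) :
    (weylU n ^ k) i j = if ((i : ℕ) + k) % n = (j : ℕ) then 1 else 0 := by
  induction k generalizing j with
  | zero =>
      simp [one_apply, Nat.mod_eq_of_lt i.isLt, Fin.val_inj, eq_comm]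
  | succ k ih =>
      rw [pow_succ, mul_apply]
      set m0 : Fin n := ⟨((i : ℕ) + k) % n, Nat.mod_lt _ (by omega)⟩ with hm0
      have h1 : ∀ m : Fin n, (weylU n ^ k) i m = if m = m0 then 1 else 0 := by
        intro m
        rw [ih m]
        exact if_congr (by simp [hm0, Fin.ext_iff, eq_comm]) rfl rfl
      simp only [h1, ite_mul, one_mul, zero_mul, Finset.sum_ite_eq', Finset.mem_univ, if_true]
      show (if ((m0 : ℕ) + 1) % n = (j : ℕ) then (1:ℂ) else 0) = _
      have : ((m0 : ℕ) + 1) % n = ((i : ℕ) + (k + 1)) % n := by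
        simp [hm0, Nat.mod_add_mod, Nat.add_assoc]
      rw [this]

lemma weyl_entry {n : ℕ} [NeZero n] (q : Fin n × Fin n) (i j : Fin n) :
    (weylU n ^ (q.1 : ℕ) * weylV n ^ (q.2 : ℕ)) i j
      = if j = i + q.1 then zeta n ^ ((q.2 : ℕ) * (j : ℕ)) else 0 := by
  have hn : 1 ≤ n := Nat.one_le_iff_ne_zero.mpr (NeZero.ne n)
  rw [weylV, Matrix.diagonal_pow, Matrix.mul_diagonal, weylU_pow_apply hn]
  have hcond : (((i : ℕ) + (q.1 : ℕ)) % n = (j : ℕ)) ↔ (j = i + q.1) := by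
    rw [Fin.ext_iff, Fin.val_add]; exact eq_comm
  rw [if_congr hcond rfl rfl]
  split <;> simp [pow_mul, mul_comm]

lemma zeta_conj {n : ℕ} (hn : 1 ≤ n) : (starRingEnd ℂ) (zeta n) = (zeta n)⁻¹ := by
  rw [zeta, ← Complex.exp_conj, ← Complex.exp_neg]
  congr 1
  simp [map_div₀, Complex.conj_I, map_ofNat]
  ring

lemma zeta_ne_zero {n : ℕ} : zeta n ≠ 0 := Complex.exp_ne_zero _

lemma zeta_prim {n : ℕ} (hn : 1 ≤ n) : IsPrimitiveRoot (zeta n) n := by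
  have := Complex.isPrimitiveRoot_exp n (by omega)
  simpa [zeta] using this

lemma trace_formula {n : ℕ} (hn : 1 ≤ n) (q p : Fin n × Fin n) :
    Matrix.trace ((weylU n ^ (q.1 : ℕ) * weylV n ^ (q.2 : ℕ)) *
        (weylU n ^ (p.1 : ℕ) * weylV n ^ (p.2 : ℕ))ᴴ)
      = if q = p then (n : ℂ) else 0 := by
  haveI : NeZero n := ⟨by omega⟩
  rw [Matrix.trace]
  have : ∀ i : Fin n,
      ((weylU n ^ (q.1 : ℕ) * weylV n ^ (q.2 : ℕ)) *
        (weylU n ^ (p.1 : ℕ) * weylV n ^ (p.2 : ℕ))ᴴ).diag i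
      = if i + q.1 = i + p.1 then
          zeta n ^ ((q.2 : ℕ) * ((i + q.1 : Fin n) : ℕ)) *
            (starRingEnd ℂ) (zeta n ^ ((p.2 : ℕ) * ((i + q.1 : Fin n) : ℕ))) else 0 := by
    intro i
    rw [Matrix.diag_apply, Matrix.mul_apply]
    have h1 : ∀ j : Fin n,
        (weylU n ^ (q.1 : ℕ) * weylV n ^ (q.2 : ℕ)) i j *
          ((weylU n ^ (p.1 : ℕ) * weylV n ^ (p.2 : ℕ))ᴴ) j i
        = if j = i + q.1 then
            (if j = i + p.1 then zeta n ^ ((q.2 : ℕ) * (j : ℕ)) *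
              (starRingEnd ℂ) (zeta n ^ ((p.2 : ℕ) * (j : ℕ))) else 0) else 0 := by
      intro j
      rw [Matrix.conjTranspose_apply, weyl_entry, weyl_entry]
      split <;> split <;> simp_all
    simp only [h1, Finset.sum_ite_eq', Finset.mem_univ, if_true]
  rw [Finset.sum_congr rfl (fun i _ => this i)]
  by_cases hk : q.1 = p.1
  · simp only [hk, if_true]
    have e1 := Equiv.sum_comp (Equiv.addRight p.1)
      (fun j : Fin n => zeta n ^ ((q.2 : ℕ) * (j : ℕ)) *
        (starRingEnd ℂ) (zeta n ^ ((p.2 : ℕ) * (j : ℕ))))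
    simp only [Equiv.coe_addRight] at e1
    have hre : ∑ i : Fin n, zeta n ^ ((q.2 : ℕ) * ((i + p.1 : Fin n) : ℕ)) *
          (starRingEnd ℂ) (zeta n ^ ((p.2 : ℕ) * ((i + p.1 : Fin n) : ℕ)))
        = ∑ j : Fin n, (zeta n ^ (q.2 : ℕ) * ((zeta n)⁻¹) ^ (p.2 : ℕ)) ^ (j : ℕ) := by
      rw [e1]
      refine Finset.sum_congr rfl fun j _ => ?_
      rw [map_pow, zeta_conj hn, pow_mul (zeta n) (q.2 : ℕ),
        pow_mul ((zeta n)⁻¹) (p.2 : ℕ), ← mul_pow]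
    rw [hre]
    by_cases hl : q.2 = p.2
    · have hq : q = p := Prod.ext hk hl
      have h2 : zeta n ^ (q.2 : ℕ) * ((zeta n)⁻¹) ^ (p.2 : ℕ) = 1 := by
        rw [hl, inv_pow, mul_inv_cancel₀ (pow_ne_zero _ zeta_ne_zero)]
      rw [h2]
      simp [hq]
    · have hq : q ≠ p := fun h => hl (by rw [h])
      set ω : ℂ := zeta n ^ (q.2 : ℕ) * ((zeta n)⁻¹) ^ (p.2 : ℕ) with hω
      have hω1 : ω ≠ 1 := by
        intro h
        apply hl
        have hz : zeta n ^ (q.2 : ℕ) = zeta n ^ (p.2 : ℕ) := by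
          rw [hω, inv_pow, mul_inv_eq_one₀ (pow_ne_zero _ zeta_ne_zero)] at h
          exact h
        exact Fin.ext ((zeta_prim hn).pow_inj q.2.isLt p.2.isLt hz)
      have hωn : ω ^ n = 1 := by
        rw [hω, mul_pow, ← pow_mul, ← pow_mul, Nat.mul_comm (q.2 : ℕ),
          Nat.mul_comm (p.2 : ℕ), pow_mul, pow_mul, (zeta_prim hn).pow_eq_one,
          inv_pow, (zeta_prim hn).pow_eq_one]
        simp
      have : ∑ j : Fin n, ω ^ (j : ℕ) = 0 := by
        rw [Fin.sum_univ_eq_sum_range (fun j => ω ^ j), geom_sum_eq hω1, hωn]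
        simp
      simp [this, hq]
  · have hq : q ≠ p := fun h => hk (by rw [h])
    have : ∀ i : Fin n, ¬ (i + q.1 = i + p.1) := fun i h => hk (add_left_cancel h)
    simp [this, hq]

/-- The `n²` matrices `U^k * V^l`, `0 ≤ k, l < n`, form a basis of the space of
`n×n` complex matrices: they are linearly independent and span. -/
theorem stmt10 {n : ℕ} (hn : 1 ≤ n) :
    LinearIndependent ℂ
        (fun q : Fin n × Fin n => weylU n ^ (q.1 : ℕ) * weylV n ^ (q.2 : ℕ)) ∧
    Submodule.span ℂ
        (Set.range fun q : Fin n × Fin n =>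
          weylU n ^ (q.1 : ℕ) * weylV n ^ (q.2 : ℕ)) = ⊤ := by
  have hind : LinearIndependent ℂ
      (fun q : Fin n × Fin n => weylU n ^ (q.1 : ℕ) * weylV n ^ (q.2 : ℕ)) := by
    rw [Fintype.linearIndependent_iff]
    intro g hg p
    have := congrArg (fun M : Matrix (Fin n) (Fin n) ℂ =>
      Matrix.trace (M * (weylU n ^ (p.1 : ℕ) * weylV n ^ (p.2 : ℕ))ᴴ)) hg
    simp only [Finset.sum_mul, Matrix.smul_mul, Matrix.trace_sum, Matrix.trace_smul,
      Matrix.zero_mul, Matrix.trace_zero] at this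
    rw [Finset.sum_congr rfl (fun q _ => by rw [trace_formula hn q p])] at this
    simp only [smul_eq_mul, mul_ite, mul_zero, Finset.sum_ite_eq', Finset.mem_univ,
      if_true] at this
    have hn0 : (n : ℂ) ≠ 0 := Nat.cast_ne_zero.mpr (by omega)
    exact (mul_eq_zero.mp this).resolve_right hn0
  refine ⟨hind, ?_⟩
  haveI : NeZero n := ⟨by omega⟩
  apply hind.span_eq_top_of_card_eq_finrank
  simp [Module.finrank_matrix]
end

section
/- Let n ≥ 1, ζ = exp(2πi/n), and let A and B be n×n unitary matrices satisfying A·B = ζ^j·B·A where gcd(j, n) = 1. If a ∈ ℂ^n is a unit eigenvector of A and b ∈ ℂ^n is a unit eigenvector of B, then |⟨a, b⟩|² = 1/n, where ⟨·,·⟩ is the standard Hermitian inner product on ℂ^n. -/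
/-!
If `A a = c a`, the relation `A B = ξ B A` makes `Bᵏ a` an eigenvector of `A` with eigenvalue
`ξᵏ c`. For `k < n` these eigenvalues are distinct, and eigenvectors of a unitary matrix for
distinct eigenvalues are orthogonal, so `a, B a, …, Bⁿ⁻¹ a` is an orthonormal basis of `ℂⁿ`.
As `b` is also an eigenvector of `Bᴴ`, for an eigenvalue of modulus one,
`|⟨Bᵏ a, b⟩| = |⟨a, b⟩|` for every `k`, and Parseval gives `n |⟨a, b⟩|² = ‖b‖² = 1`.
-/

open Matrix

namespace Matrix

section CommRing

variable {m R : Type*} [Fintype m] [DecidableEq m] [CommRing R]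

theorem mulVec_pow_mulVec_eq_smul_of_mul_eq_smul_mul {A B : Matrix m m R} {ξ c : R}
    {x : m → R} (hAB : A * B = ξ • (B * A)) (hx : A *ᵥ x = c • x) (k : ℕ) :
    A *ᵥ (B ^ k *ᵥ x) = (ξ ^ k * c) • (B ^ k *ᵥ x) := by
  induction k with
  | zero => simpa using hx
  | succ k ih =>
    rw [pow_succ', ← mulVec_mulVec, mulVec_mulVec, hAB, smul_mulVec, ← mulVec_mulVec, ih,
      mulVec_smul, smul_smul, pow_succ', mul_assoc]

end CommRing

variable {m 𝕜 : Type*} [Fintype m] [DecidableEq m] [RCLike 𝕜] {U : Matrix m m 𝕜}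

theorem star_mulVec_dotProduct_mulVec (hU : U ∈ unitaryGroup m 𝕜) (x y : m → 𝕜) :
    star (U *ᵥ x) ⬝ᵥ (U *ᵥ y) = star x ⬝ᵥ y := by
  rw [star_mulVec, ← dotProduct_mulVec, mulVec_mulVec, ← star_eq_conjTranspose,
    Unitary.star_mul_self_of_mem hU, one_mulVec]

open scoped ComplexOrder in
theorem norm_eq_one_of_mulVec_eq_smul (hU : U ∈ unitaryGroup m 𝕜) {x : m → 𝕜}
    (hx : x ≠ 0) {c : 𝕜} (h : U *ᵥ x = c • x) : ‖c‖ = 1 := by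
  have hxx : star x ⬝ᵥ x ≠ 0 := dotProduct_star_self_eq_zero.not.mpr hx
  have := star_mulVec_dotProduct_mulVec hU x x
  rw [h, star_smul, smul_dotProduct, dotProduct_smul, smul_eq_mul, smul_eq_mul, ← mul_assoc,
    RCLike.star_def, RCLike.conj_mul] at this
  have hc : (‖c‖ ^ 2 : 𝕜) = 1 := mul_right_cancel₀ hxx (this.trans (one_mul _).symm)
  exact (pow_eq_one_iff_of_nonneg (norm_nonneg c) two_ne_zero).mp (mod_cast hc)

theorem conjTranspose_mulVec_of_mulVec_eq_smul (hU : U ∈ unitaryGroup m 𝕜) {x : m → 𝕜} {c : 𝕜}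
    (h : U *ᵥ x = c • x) : Uᴴ *ᵥ x = star c • x := by
  rcases eq_or_ne x 0 with rfl | hx
  · simp
  have hUx : Uᴴ *ᵥ (U *ᵥ x) = x := by
    rw [mulVec_mulVec, ← star_eq_conjTranspose, Unitary.star_mul_self_of_mem hU, one_mulVec]
  rw [h, mulVec_smul] at hUx
  have hc : star c * c = 1 := by
    rw [RCLike.star_def, RCLike.conj_mul, norm_eq_one_of_mulVec_eq_smul hU hx h]
    norm_num
  calc Uᴴ *ᵥ x = (star c * c) • Uᴴ *ᵥ x := by rw [hc, one_smul]
    _ = star c • x := by rw [← smul_smul, hUx]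

theorem star_dotProduct_eq_zero_of_mulVec_eq_smul (hU : U ∈ unitaryGroup m 𝕜) {x y : m → 𝕜}
    {c d : 𝕜} (hx : U *ᵥ x = c • x) (hy : U *ᵥ y = d • y) (hcd : c ≠ d) : star x ⬝ᵥ y = 0 := by
  have hUx : Uᴴ *ᵥ x = star c • x := conjTranspose_mulVec_of_mulVec_eq_smul hU hx
  have : d * (star x ⬝ᵥ y) = c * (star x ⬝ᵥ y) := by
    calc d * (star x ⬝ᵥ y) = star x ⬝ᵥ (U *ᵥ y) := by rw [hy, dotProduct_smul, smul_eq_mul]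
      _ = star (Uᴴ *ᵥ x) ⬝ᵥ y := by rw [dotProduct_mulVec, star_mulVec, conjTranspose_conjTranspose]
      _ = c * (star x ⬝ᵥ y) := by rw [hUx, star_smul, star_star, smul_dotProduct, smul_eq_mul]
  exact (mul_eq_mul_right_iff.mp this).resolve_left hcd.symm

theorem norm_star_mulVec_dotProduct_of_mulVec_eq_smul (hU : U ∈ unitaryGroup m 𝕜) {y : m → 𝕜}
    {c : 𝕜} (hy : U *ᵥ y = c • y) (x : m → 𝕜) : ‖star (U *ᵥ x) ⬝ᵥ y‖ = ‖star x ⬝ᵥ y‖ := by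
  rcases eq_or_ne y 0 with rfl | hy0
  · simp
  rw [star_mulVec, ← dotProduct_mulVec, conjTranspose_mulVec_of_mulVec_eq_smul hU hy,
    dotProduct_smul, smul_eq_mul, norm_mul, norm_star, norm_eq_one_of_mulVec_eq_smul hU hy0 hy,
    one_mul]

theorem norm_star_pow_mulVec_dotProduct_of_mulVec_eq_smul (hU : U ∈ unitaryGroup m 𝕜)
    {y : m → 𝕜} {c : 𝕜} (hy : U *ᵥ y = c • y) (x : m → 𝕜) (k : ℕ) :
    ‖star (U ^ k *ᵥ x) ⬝ᵥ y‖ = ‖star x ⬝ᵥ y‖ := by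
  induction k with
  | zero => simp
  | succ k ih =>
    rw [pow_succ', ← mulVec_mulVec, norm_star_mulVec_dotProduct_of_mulVec_eq_smul hU hy, ih]

theorem sum_norm_sq_star_dotProduct_of_orthonormal {v : m → m → 𝕜}
    (hv : ∀ k l, star (v k) ⬝ᵥ v l = if k = l then 1 else 0) (b : m → 𝕜) :
    ∑ k, (‖star (v k) ⬝ᵥ b‖ ^ 2 : 𝕜) = star b ⬝ᵥ b := by
  set V : Matrix m m 𝕜 := of fun k i => star (v k i)
  have hV : V ∈ unitaryGroup m 𝕜 := by
    rw [mem_unitaryGroup_iff]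
    ext k l
    simpa [V, mul_apply, dotProduct, one_apply] using hv k l
  rw [← star_mulVec_dotProduct_mulVec hV b b]
  simp only [dotProduct, Pi.star_apply, RCLike.star_def, RCLike.conj_mul]
  rfl

theorem star_pow_mulVec_dotProduct_pow_mulVec_of_mul_eq_smul_mul {A B : Matrix m m 𝕜}
    (hA : A ∈ unitaryGroup m 𝕜) (hB : B ∈ unitaryGroup m 𝕜) {n : ℕ} {ξ : 𝕜}
    (hξ : IsPrimitiveRoot ξ n) (hAB : A * B = ξ • (B * A)) {a : m → 𝕜} {c : 𝕜}
    (ha : A *ᵥ a = c • a) (hna : star a ⬝ᵥ a = 1) (k l : Fin n) :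
    star (B ^ (k : ℕ) *ᵥ a) ⬝ᵥ (B ^ (l : ℕ) *ᵥ a) = if k = l then 1 else 0 := by
  rcases eq_or_ne k l with rfl | hkl
  · rw [star_mulVec_dotProduct_mulVec (pow_mem hB _), hna, if_pos rfl]
  have hc : c ≠ 0 := by
    have ha0 : a ≠ 0 := by rintro rfl; simp at hna
    intro hc0
    simpa [hc0] using norm_eq_one_of_mulVec_eq_smul hA ha0 ha
  rw [if_neg hkl]
  refine star_dotProduct_eq_zero_of_mulVec_eq_smul hA
    (mulVec_pow_mulVec_eq_smul_of_mul_eq_smul_mul hAB ha k)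
    (mulVec_pow_mulVec_eq_smul_of_mul_eq_smul_mul hAB ha l) ?_
  rw [Ne, mul_left_inj' hc]
  exact fun h => hkl (Fin.ext (hξ.pow_inj k.isLt l.isLt h))

theorem norm_sq_star_dotProduct_eq_one_div_of_mul_eq_smul_mul {n : ℕ}
    {A B : Matrix (Fin n) (Fin n) 𝕜} (hA : A ∈ unitaryGroup (Fin n) 𝕜)
    (hB : B ∈ unitaryGroup (Fin n) 𝕜) {ξ : 𝕜} (hξ : IsPrimitiveRoot ξ n)
    (hAB : A * B = ξ • (B * A)) {a b : Fin n → 𝕜} {ca cb : 𝕜} (ha : A *ᵥ a = ca • a)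
    (hb : B *ᵥ b = cb • b) (hna : star a ⬝ᵥ a = 1) (hnb : star b ⬝ᵥ b = 1) :
    ‖star a ⬝ᵥ b‖ ^ 2 = 1 / n := by
  have hparseval := sum_norm_sq_star_dotProduct_of_orthonormal
    (star_pow_mulVec_dotProduct_pow_mulVec_of_mul_eq_smul_mul hA hB hξ hAB ha hna) b
  simp only [norm_star_pow_mulVec_dotProduct_of_mulVec_eq_smul hB hb, Finset.sum_const,
    Finset.card_univ, Fintype.card_fin, nsmul_eq_mul, hnb] at hparseval
  exact eq_one_div_of_mul_eq_one_right (mod_cast hparseval)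

end Matrix

/-- If `A`, `B` are unitary with `A * B = ζ^j • (B * A)`, `gcd(j, n) = 1`, then
any unit eigenvector `a` of `A` and any unit eigenvector `b` of `B` satisfy
`|⟨a, b⟩|² = 1/n` (eigenbases of `A` and `B` are mutually unbiased). -/
theorem stmt12 {n : ℕ} (hn : 1 ≤ n) (j : ℕ) (hj : Nat.gcd j n = 1)
    (A B : Matrix (Fin n) (Fin n) ℂ) (hA : A * Aᴴ = 1) (hB : B * Bᴴ = 1)
    (hcomm : A * B = zeta n ^ j • (B * A))
    (a b : Fin n → ℂ) (ca cb : ℂ)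
    (ha : A.mulVec a = ca • a) (hb : B.mulVec b = cb • b)
    (hna : (∑ x, (starRingEnd ℂ) (a x) * a x) = 1)
    (hnb : (∑ x, (starRingEnd ℂ) (b x) * b x) = 1) :
    ‖∑ x, (starRingEnd ℂ) (a x) * b x‖ ^ 2 = 1 / n :=
  norm_sq_star_dotProduct_eq_one_div_of_mul_eq_smul_mul (mem_unitaryGroup_iff.mpr hA)
    (mem_unitaryGroup_iff.mpr hB)
    ((Complex.isPrimitiveRoot_exp n (by omega)).pow_of_coprime j hj) hcomm ha hb hna hnb
end
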